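/- arXiv:math-ph/0104017 — 2 statements merged into one kernel-verified Lean document; each statement's English description precedes it below -/
import Mathlib

section
/- Let H_* be the subalgebra of the convolution algebra H* generated by the counit ε and all infinitesimal characters of H. Then the transpose Δ_* = m^t of the multiplication of H (defined by (Δ_*ξ)(h⊗h') = ξ(hh')) maps H_* into H_*⊗H_* (viewed inside (H⊗H)*), is multiplicative on H_*, and is cocommutative on H_*: (Δ_*ξ)(h⊗h') = (Δ_*ξ)(h'⊗h) for all ξ∈H_* and h,h'∈H; with counit ξ↦ξ(1) and antipode the transpose S_* of S, H_* is a cocommutative Hopf algebra over k. -/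
open TensorProduct

universe u

/-- The convolution product on the algebraic dual `H →ₗ[R] R` of a coalgebra `H`:
`⟨ξ * η, h⟩ = ⟨ξ ⊗ η, Δ h⟩`. -/
noncomputable def conv {R H : Type u} [CommSemiring R] [AddCommMonoid H] [Module R H]
    [Coalgebra R H] (ξ η : H →ₗ[R] R) : H →ₗ[R] R :=
  LinearMap.mul' R R ∘ₗ TensorProduct.map ξ η ∘ₗ Coalgebra.comul

/-- An infinitesimal character of `H`: an `R`-linear map `Z : H → R` with
`Z (hk) = Z h * ε k + ε h * Z k`. -/
def IsInfinitesimalCharacter {R H : Type u} [CommSemiring R] [Semiring H] [Module R H]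
    [Coalgebra R H] (Z : H →ₗ[R] R) : Prop :=
  ∀ a b : H, Z (a * b) = Z a * Coalgebra.counit b + Coalgebra.counit a * Z b

/-- `H_*`: the subalgebra of the convolution algebra `H*` generated by the counit `ε` and all
infinitesimal characters of `H`, i.e. the smallest subset of `H*` containing `ε` and the
infinitesimal characters and closed under addition, scalar multiplication and convolution. -/
noncomputable def Hstar (R H : Type u) [CommSemiring R] [Semiring H] [Module R H]
    [Coalgebra R H] : Set (H →ₗ[R] R) :=
  ⋂₀ {S : Set (H →ₗ[R] R) |
      (Coalgebra.counit : H →ₗ[R] R) ∈ S ∧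
      (∀ Z : H →ₗ[R] R, IsInfinitesimalCharacter Z → Z ∈ S) ∧
      (∀ ξ ∈ S, ∀ η ∈ S, ξ + η ∈ S) ∧
      (∀ (c : R), ∀ ξ ∈ S, c • ξ ∈ S) ∧
      (∀ ξ ∈ S, ∀ η ∈ S, conv ξ η ∈ S)}

/-- The transpose `Δ_* = mᵗ` of the multiplication of `H`, as a map `H* → (H ⊗ H)*`:
`(Δ_* ξ)(h ⊗ h') = ξ (h h')`. -/
noncomputable def mulTranspose {R H : Type u} [CommSemiring R] [Semiring H] [Algebra R H]
    (ξ : H →ₗ[R] R) : (H ⊗[R] H) →ₗ[R] R :=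
  ξ ∘ₗ LinearMap.mul' R H

/-!
The claims about `H_*` are proved by induction over its generators. Since `m : H ⊗ H → H` is a
coalgebra map, `Δ_* = (- ∘ m)` is multiplicative for convolution. The generators satisfy
`Δ_* ε = ε ⊗ ε` and `Δ_* Z = Z ⊗ ε + ε ⊗ Z`, so they are cocommutative and `Δ_*` sends them into
`H_* ⊗ H_*`; both properties survive sums, scalar multiples and convolution products.
Transposing the antipode sends `ε` to `ε` and `Z` to `-Z`, and it reverses convolution
products because `S` is an anti-coalgebra map, so it preserves `H_*`. The antipode identities
for a decomposition of `Δ_* ξ` are the transposes of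
`m ∘ (S ⊗ id) ∘ Δ = ε(-) 1 = m ∘ (id ⊗ S) ∘ Δ`.
-/

open Coalgebra HopfAlgebra WithConv

namespace HopfAlgebra

variable {R H : Type*} [CommSemiring R] [Semiring H] [HopfAlgebra R H]

lemma comul_comp_antipode :
    comul ∘ₗ antipode R (A := H) =
      map (antipode R) (antipode R) ∘ₗ (TensorProduct.comm R H H).toLinearMap ∘ₗ comul := by
  -- In the convolution algebra `Hom(H, H ⊗ H)` we have `Δ = ι₁ * ι₂` and
  -- `(S ⊗ S) ∘ τ ∘ Δ = (ι₂ ∘ S) * (ι₁ ∘ S)`, so the right side is a left inverse of `Δ`,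
  -- whose right inverse is `Δ ∘ S`.
  let ι₁ : H →ₐ[R] H ⊗[R] H := Algebra.TensorProduct.includeLeft
  let ι₂ : H →ₐ[R] H ⊗[R] H := Algebra.TensorProduct.includeRight
  have comul_eq : toConv (comul (R := R) (A := H)) =
      toConv ι₁.toLinearMap * toConv ι₂.toLinearMap := by
    ext a
    rw [(ℛ R a).convMul_apply, ← (ℛ R a).eq]
    simp [ι₁, ι₂]
  have antipode_eq : toConv (map (antipode R) (antipode R) ∘ₗ
      (TensorProduct.comm R H H).toLinearMap ∘ₗ comul (R := R) (A := H)) =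
      toConv (ι₂.toLinearMap ∘ₗ antipode R) * toConv (ι₁.toLinearMap ∘ₗ antipode R) := by
    ext a
    rw [(ℛ R a).convMul_apply, ofConv_toConv, LinearMap.comp_apply, LinearMap.comp_apply,
      ← (ℛ R a).eq]
    simp [ι₁, ι₂]
  have inv_eq (ι : H →ₐ[R] H ⊗[R] H) :
      toConv (ι.toLinearMap ∘ₗ antipode R) * toConv ι.toLinearMap = 1 := by
    have h := LinearMap.algHom_comp_convMul_distrib ι (toConv (antipode R)) (toConv .id)
    rw [LinearMap.antipode_mul_id, LinearMap.algHom_comp_convOne] at h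
    exact congrArg toConv h.symm
  have left_inv : toConv (map (antipode R) (antipode R) ∘ₗ
      (TensorProduct.comm R H H).toLinearMap ∘ₗ comul (R := R) (A := H)) * toConv comul = 1 := by
    rw [antipode_eq, comul_eq, mul_assoc, ← mul_assoc (toConv (ι₁.toLinearMap ∘ₗ antipode R)),
      inv_eq, one_mul, inv_eq]
  exact congrArg ofConv
    (left_inv_eq_right_inv left_inv (LinearMap.comul_right_inv (R := R) (C := H))).symm

end HopfAlgebra

section Convolution

variable {R C : Type u} [CommSemiring R] [AddCommMonoid C] [Module R C] [Coalgebra R C]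

lemma Coalgebra.Repr.conv_apply {ι : Type*} {a : C} (𝓡 : Coalgebra.Repr R a ι)
    (ξ η : C →ₗ[R] R) : conv ξ η a = ∑ i ∈ 𝓡.index, ξ (𝓡.left i) * η (𝓡.right i) :=
  𝓡.convMul_apply (toConv ξ) (toConv η)

lemma conv_counit (ξ : C →ₗ[R] R) : conv ξ counit = ξ := congrArg ofConv (mul_one (toConv ξ))

lemma counit_conv (ξ : C →ₗ[R] R) : conv counit ξ = ξ := congrArg ofConv (one_mul (toConv ξ))

noncomputable def convBilin : (C →ₗ[R] R) →ₗ[R] (C →ₗ[R] R) →ₗ[R] (C →ₗ[R] R) :=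
  ((LinearMap.mul R (WithConv (C →ₗ[R] R))).compl₁₂
    (WithConv.linearEquiv R _).symm.toLinearMap (WithConv.linearEquiv R _).symm.toLinearMap).compr₂
    (WithConv.linearEquiv R _).toLinearMap

lemma convBilin_apply (ξ η : C →ₗ[R] R) : convBilin ξ η = conv ξ η := rfl

lemma conv_mem_span {S : Set (C →ₗ[R] R)} (hS : ∀ ξ ∈ S, ∀ η ∈ S, conv ξ η ∈ S)
    {ξ η : C →ₗ[R] R} (hξ : ξ ∈ Submodule.span R S) (hη : η ∈ Submodule.span R S) :
    conv ξ η ∈ Submodule.span R S := by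
  have h := Submodule.apply_mem_map₂ convBilin hξ hη
  rw [Submodule.map₂_span_span, convBilin_apply] at h
  refine Submodule.span_le.2 (Set.image2_subset_iff.2 fun ξ hξ η hη ↦ ?_) h
  rw [SetLike.mem_coe, convBilin_apply]
  exact Submodule.subset_span (hS ξ hξ η hη)

lemma dualDistrib_conv_dualDistrib {D : Type u} [AddCommMonoid D] [Module R D] [Coalgebra R D]
    (f p : C →ₗ[R] R) (g q : D →ₗ[R] R) :
    conv (dualDistrib R C D (f ⊗ₜ g)) (dualDistrib R C D (p ⊗ₜ q)) =
      dualDistrib R C D (conv f p ⊗ₜ conv g q) := by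
  refine ext' fun c d ↦ ?_
  rw [dualDistrib_apply, (ℛ R c).conv_apply, (ℛ R d).conv_apply, Finset.sum_mul_sum]
  simp only [conv, LinearMap.comp_apply, comul_tmul, ← (ℛ R c).eq, ← (ℛ R d).eq, tmul_sum,
    sum_tmul, map_sum, AlgebraTensorModule.tensorTensorTensorComm_tmul, map_tmul,
    dualDistrib_apply, LinearMap.mul'_apply, mul_mul_mul_comm]
  exact Finset.sum_comm

end Convolution

section Bialgebra

variable {R H : Type u} [CommSemiring R] [Semiring H] [Bialgebra R H]

lemma conv_apply_one (ξ η : H →ₗ[R] R) : conv ξ η 1 = ξ 1 * η 1 := by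
  simp [conv, Algebra.TensorProduct.one_def]

lemma mulTranspose_conv (ξ η : H →ₗ[R] R) :
    mulTranspose (conv ξ η) = conv (mulTranspose ξ) (mulTranspose η) :=
  LinearMap.convMul_comp_coalgHom_distrib (toConv ξ) (toConv η) (Bialgebra.mulCoalgHom R H)

lemma mulTranspose_conv_comp_comm (ξ η : H →ₗ[R] R) :
    mulTranspose (conv ξ η) ∘ₗ (TensorProduct.comm R H H).toLinearMap =
      conv (mulTranspose ξ ∘ₗ (TensorProduct.comm R H H).toLinearMap)
        (mulTranspose η ∘ₗ (TensorProduct.comm R H H).toLinearMap) := by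
  rw [mulTranspose_conv]
  exact LinearMap.convMul_comp_coalgHom_distrib (toConv (mulTranspose ξ))
    (toConv (mulTranspose η))
    ((Bialgebra.TensorProduct.comm R H H : H ⊗[R] H →ₐc[R] H ⊗[R] H) : H ⊗[R] H →ₗc[R] H ⊗[R] H)

end Bialgebra

lemma conv_comp_antipode {R H : Type u} [CommSemiring R] [Semiring H] [HopfAlgebra R H]
    (ξ η : H →ₗ[R] R) :
    conv ξ η ∘ₗ antipode R = conv (η ∘ₗ antipode R) (ξ ∘ₗ antipode R) := by
  ext h
  have comul_antipode := LinearMap.congr_fun (comul_comp_antipode (R := R) (H := H)) h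
  simp only [LinearMap.comp_apply] at comul_antipode
  simp [conv, comul_antipode, ← (ℛ R h).eq, mul_comm]

namespace IsInfinitesimalCharacter

lemma map_one {R H : Type u} [CommRing R] [Semiring H] [Bialgebra R H] {Z : H →ₗ[R] R}
    (hZ : IsInfinitesimalCharacter Z) : Z 1 = 0 := by
  simpa using hZ 1 1

lemma mulTranspose_eq {R H : Type u} [CommSemiring R] [Semiring H] [Bialgebra R H]
    {Z : H →ₗ[R] R} (hZ : IsInfinitesimalCharacter Z) :
    mulTranspose Z = dualDistrib R H H (Z ⊗ₜ counit) + dualDistrib R H H (counit ⊗ₜ Z) :=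
  ext' fun a b ↦ by simp [mulTranspose, hZ a b]

lemma comp_antipode {R H : Type u} [CommRing R] [Semiring H] [HopfAlgebra R H] {Z : H →ₗ[R] R}
    (hZ : IsInfinitesimalCharacter Z) : Z ∘ₗ antipode R = -Z := by
  ext h
  let 𝓡 := ℛ R h
  have key : Z (antipode R h) + Z h = 0 := calc
    Z (antipode R h) + Z h = conv (Z ∘ₗ antipode R) counit h + conv (counit ∘ₗ antipode R) Z h := by
      rw [conv_counit, counit_comp_antipode, counit_conv, LinearMap.comp_apply]
    _ = Z (∑ i ∈ 𝓡.index, antipode R (𝓡.left i) * 𝓡.right i) := by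
      simp only [𝓡.conv_apply, LinearMap.comp_apply, map_sum, hZ _ _, counit_antipode,
        Finset.sum_add_distrib]
    _ = 0 := by
      rw [sum_antipode_mul_eq_algebraMap_counit, Algebra.algebraMap_eq_smul_one, map_smul,
        hZ.map_one, smul_zero]
  simpa [eq_neg_iff_add_eq_zero] using key

end IsInfinitesimalCharacter

namespace Hstar

section Coalgebra

variable {R H : Type u} [CommSemiring R] [Semiring H] [Module R H] [Coalgebra R H]

lemma counit_mem : (counit : H →ₗ[R] R) ∈ Hstar R H :=
  Set.mem_sInter.2 fun _ hS ↦ hS.1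

lemma mem_of_isInfinitesimalCharacter {Z : H →ₗ[R] R} (hZ : IsInfinitesimalCharacter Z) :
    Z ∈ Hstar R H :=
  Set.mem_sInter.2 fun _ hS ↦ hS.2.1 Z hZ

lemma add_mem {ξ η : H →ₗ[R] R} (hξ : ξ ∈ Hstar R H) (hη : η ∈ Hstar R H) :
    ξ + η ∈ Hstar R H :=
  Set.mem_sInter.2 fun S hS ↦ hS.2.2.1 ξ (Set.mem_sInter.1 hξ S hS) η (Set.mem_sInter.1 hη S hS)

lemma smul_mem (c : R) {ξ : H →ₗ[R] R} (hξ : ξ ∈ Hstar R H) : c • ξ ∈ Hstar R H :=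
  Set.mem_sInter.2 fun S hS ↦ hS.2.2.2.1 c ξ (Set.mem_sInter.1 hξ S hS)

lemma conv_mem {ξ η : H →ₗ[R] R} (hξ : ξ ∈ Hstar R H) (hη : η ∈ Hstar R H) :
    conv ξ η ∈ Hstar R H :=
  Set.mem_sInter.2 fun S hS ↦
    hS.2.2.2.2 ξ (Set.mem_sInter.1 hξ S hS) η (Set.mem_sInter.1 hη S hS)

@[elab_as_elim]
theorem induction_on {P : (ξ : H →ₗ[R] R) → ξ ∈ Hstar R H → Prop}
    (counit : P counit counit_mem)
    (infinitesimal : ∀ Z hZ, P Z (mem_of_isInfinitesimalCharacter hZ))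
    (add : ∀ ξ η hξ hη, P ξ hξ → P η hη → P (ξ + η) (add_mem hξ hη))
    (smul : ∀ (c : R) ξ hξ, P ξ hξ → P (c • ξ) (smul_mem c hξ))
    (conv : ∀ ξ η hξ hη, P ξ hξ → P η hη → P (conv ξ η) (conv_mem hξ hη))
    {ξ : H →ₗ[R] R} (hξ : ξ ∈ Hstar R H) : P ξ hξ :=
  (Set.mem_sInter.1 hξ {ζ | ∃ hζ, P ζ hζ}
    ⟨⟨_, counit⟩, fun Z hZ ↦ ⟨_, infinitesimal Z hZ⟩,
      fun _ ⟨_, ha⟩ _ ⟨_, hb⟩ ↦ ⟨_, add _ _ _ _ ha hb⟩,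
      fun c _ ⟨_, ha⟩ ↦ ⟨_, smul c _ _ ha⟩,
      fun _ ⟨_, ha⟩ _ ⟨_, hb⟩ ↦ ⟨_, conv _ _ _ _ ha hb⟩⟩).2

end Coalgebra

section Bialgebra

variable {R H : Type u} [CommSemiring R] [Semiring H] [Bialgebra R H] {ξ : H →ₗ[R] R}

lemma mulTranspose_comp_comm (hξ : ξ ∈ Hstar R H) :
    mulTranspose ξ ∘ₗ (TensorProduct.comm R H H).toLinearMap = mulTranspose ξ := by
  induction hξ using Hstar.induction_on with
  | counit => exact ext' fun a b ↦ by simp [mulTranspose, mul_comm]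
  | infinitesimal Z hZ =>
    refine ext' fun a b ↦ ?_
    simp [mulTranspose, hZ a b, hZ b a, add_comm, mul_comm]
  | add ξ η _ _ hξ hη => exact (LinearMap.add_comp _ _ _).trans (congrArg₂ (· + ·) hξ hη)
  | smul c ξ _ hξ => exact (LinearMap.smul_comp _ _ _).trans (congrArg (c • ·) hξ)
  | conv ξ η _ _ hξ hη => rw [mulTranspose_conv_comp_comm, hξ, hη, mulTranspose_conv]

lemma mulTranspose_mem_span (hξ : ξ ∈ Hstar R H) :
    mulTranspose ξ ∈ Submodule.span R
      (Set.image2 (fun f g ↦ dualDistrib R H H (f ⊗ₜ g)) (Hstar R H) (Hstar R H)) := by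
  induction hξ using Hstar.induction_on with
  | counit =>
    refine Submodule.subset_span ⟨_, counit_mem, _, counit_mem, ?_⟩
    exact ext' fun a b ↦ by simp [mulTranspose]
  | infinitesimal Z hZ =>
    rw [hZ.mulTranspose_eq]
    exact Submodule.add_mem _
      (Submodule.subset_span ⟨_, mem_of_isInfinitesimalCharacter hZ, _, counit_mem, rfl⟩)
      (Submodule.subset_span ⟨_, counit_mem, _, mem_of_isInfinitesimalCharacter hZ, rfl⟩)
  | add ξ η _ _ hξ hη => exact Submodule.add_mem _ hξ hη
  | smul c ξ _ hξ => exact Submodule.smul_mem _ c hξ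
  | conv ξ η _ _ hξ hη =>
    rw [mulTranspose_conv]
    refine conv_mem_span ?_ hξ hη
    rintro _ ⟨f, hf, g, hg, rfl⟩ _ ⟨p, hp, q, hq, rfl⟩
    exact ⟨_, conv_mem hf hp, _, conv_mem hg hq, (dualDistrib_conv_dualDistrib _ _ _ _).symm⟩

lemma exists_apply_mul_eq_sum (hξ : ξ ∈ Hstar R H) :
    ∃ (m : ℕ) (f g : Fin m → (H →ₗ[R] R)), (∀ i, f i ∈ Hstar R H) ∧ (∀ i, g i ∈ Hstar R H) ∧
      ∀ a b : H, ξ (a * b) = ∑ i, f i a * g i b := by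
  obtain ⟨m, c, t, ht⟩ := Submodule.mem_span_set'.1 (mulTranspose_mem_span hξ)
  choose f hf g hg hfg using fun i ↦ (t i).2
  refine ⟨m, fun i ↦ c i • f i, g, fun i ↦ smul_mem _ (hf i), hg, fun a b ↦ ?_⟩
  simp_rw [← hfg] at ht
  simpa [mulTranspose, mul_assoc] using (LinearMap.congr_fun ht (a ⊗ₜ b)).symm

end Bialgebra

lemma comp_antipode_mem {R H : Type u} [CommRing R] [Semiring H] [HopfAlgebra R H]
    {ξ : H →ₗ[R] R} (hξ : ξ ∈ Hstar R H) : ξ ∘ₗ antipode R ∈ Hstar R H := by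
  induction hξ using Hstar.induction_on with
  | counit => rw [counit_comp_antipode]; exact counit_mem
  | infinitesimal Z hZ =>
    rw [hZ.comp_antipode, ← neg_one_smul R Z]
    exact smul_mem _ (mem_of_isInfinitesimalCharacter hZ)
  | add ξ η _ _ hξ hη => rw [LinearMap.add_comp]; exact add_mem hξ hη
  | smul c ξ _ hξ => rw [LinearMap.smul_comp]; exact smul_mem c hξ
  | conv ξ η _ _ hξ hη => rw [conv_comp_antipode]; exact conv_mem hη hξ

end Hstar

section AntipodeIdentities

variable {R H : Type u} [CommSemiring R] [Semiring H] [HopfAlgebra R H]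
  {ι : Type*} [Fintype ι] {ξ : H →ₗ[R] R} {f g : ι → H →ₗ[R] R}

lemma sum_antipode_conv_eq_smul_counit (hfg : ∀ a b : H, ξ (a * b) = ∑ i, f i a * g i b) :
    ∑ i, conv (f i ∘ₗ antipode R) (g i) = ξ 1 • counit := by
  ext h
  let 𝓡 := ℛ R h
  calc (∑ i, conv (f i ∘ₗ antipode R) (g i)) h
      = ∑ j ∈ 𝓡.index, ξ (antipode R (𝓡.left j) * 𝓡.right j) := by
        simp only [LinearMap.sum_apply, 𝓡.conv_apply, LinearMap.comp_apply, hfg]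
        exact Finset.sum_comm
    _ = ξ 1 * counit h := by
        rw [← map_sum, sum_antipode_mul_eq_algebraMap_counit, Algebra.algebraMap_eq_smul_one,
          map_smul, smul_eq_mul, mul_comm]

lemma sum_conv_antipode_eq_smul_counit (hfg : ∀ a b : H, ξ (a * b) = ∑ i, f i a * g i b) :
    ∑ i, conv (f i) (g i ∘ₗ antipode R) = ξ 1 • counit := by
  ext h
  let 𝓡 := ℛ R h
  calc (∑ i, conv (f i) (g i ∘ₗ antipode R)) h
      = ∑ j ∈ 𝓡.index, ξ (𝓡.left j * antipode R (𝓡.right j)) := by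
        simp only [LinearMap.sum_apply, 𝓡.conv_apply, LinearMap.comp_apply, hfg]
        exact Finset.sum_comm
    _ = ξ 1 * counit h := by
        rw [← map_sum, sum_mul_antipode_eq_algebraMap_counit, Algebra.algebraMap_eq_smul_one,
          map_smul, smul_eq_mul, mul_comm]

end AntipodeIdentities

theorem Hstar_is_cocommutative_HopfAlgebra_general
    {R H : Type u} [Field R] [Ring H] [HopfAlgebra R H] :
    -- `Δ_*` is multiplicative on `H_*`
    (∀ ξ ∈ Hstar R H, ∀ η ∈ Hstar R H,
      mulTranspose (conv ξ η) = conv (mulTranspose ξ) (mulTranspose η)) ∧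
    -- `Δ_*` is cocommutative on `H_*`
    (∀ ξ ∈ Hstar R H, ∀ h h' : H, mulTranspose ξ (h ⊗ₜ[R] h') = mulTranspose ξ (h' ⊗ₜ[R] h)) ∧
    -- the counit `ξ ↦ ξ(1)` is an algebra map on `H_*`
    ((Coalgebra.counit : H →ₗ[R] R) 1 = 1 ∧
      ∀ ξ ∈ Hstar R H, ∀ η ∈ Hstar R H, conv ξ η 1 = ξ 1 * η 1) ∧
    -- `H_*` is stable under `S_*`
    (∀ ξ ∈ Hstar R H, ξ ∘ₗ HopfAlgebra.antipode (R := R) (A := H) ∈ Hstar R H) ∧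
    -- `Δ_*` maps `H_*` into `H_* ⊗ H_*`, and with this decomposition `S_*` satisfies the
    -- antipode axiom with counit `ξ ↦ ξ(1)`
    (∀ ξ ∈ Hstar R H, ∃ (m : ℕ) (f g : Fin m → (H →ₗ[R] R)),
      (∀ i, f i ∈ Hstar R H) ∧ (∀ i, g i ∈ Hstar R H) ∧
      (∀ h h' : H, ξ (h * h') = ∑ i, f i h * g i h') ∧
      (∑ i, conv (f i ∘ₗ HopfAlgebra.antipode (R := R) (A := H)) (g i))
        = ξ 1 • (Coalgebra.counit : H →ₗ[R] R) ∧
      (∑ i, conv (f i) (g i ∘ₗ HopfAlgebra.antipode (R := R) (A := H)))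
        = ξ 1 • (Coalgebra.counit : H →ₗ[R] R)) := by
  refine ⟨fun ξ _ η _ ↦ mulTranspose_conv ξ η, fun ξ hξ h h' ↦ ?_,
    ⟨Bialgebra.counit_one, fun ξ _ η _ ↦ conv_apply_one ξ η⟩,
    fun _ ↦ Hstar.comp_antipode_mem (R := R), fun ξ hξ ↦ ?_⟩
  · simpa using LinearMap.congr_fun (Hstar.mulTranspose_comp_comm hξ) (h' ⊗ₜ h)
  · obtain ⟨m, f, g, hf, hg, hfg⟩ := Hstar.exists_apply_mul_eq_sum hξ
    exact ⟨m, f, g, hf, hg, hfg, sum_antipode_conv_eq_smul_counit hfg,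
      sum_conv_antipode_eq_smul_counit hfg⟩

/-- `H_*` is a cocommutative Hopf algebra: `Δ_* = mᵗ` maps `H_*` into `H_* ⊗ H_*` (each
`Δ_* ξ`, `ξ ∈ H_*`, is a finite sum of products of pairs of elements of `H_*`), `Δ_*` is
multiplicative on `H_*` (with respect to the convolution product on `(H ⊗ H)*` coming from
the tensor-product coalgebra structure on `H ⊗ H`), `Δ_*` is cocommutative on `H_*`, the
counit `ξ ↦ ξ(1)` is multiplicative with value `1` on `ε`, `H_*` is stable under the
antipode `S_* : ξ ↦ ξ ∘ S`, and `S_*` satisfies the antipode axiom with respect to the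
tensor decompositions of `Δ_* ξ` and the counit `ξ ↦ ξ(1)`. -/
theorem Hstar_is_cocommutative_HopfAlgebra
    {R H : Type u} [Field R] [CharZero R] [Ring H] [HopfAlgebra R H] :
    -- `Δ_*` is multiplicative on `H_*`
    (∀ ξ ∈ Hstar R H, ∀ η ∈ Hstar R H,
      mulTranspose (conv ξ η) = conv (mulTranspose ξ) (mulTranspose η)) ∧
    -- `Δ_*` is cocommutative on `H_*`
    (∀ ξ ∈ Hstar R H, ∀ h h' : H, mulTranspose ξ (h ⊗ₜ[R] h') = mulTranspose ξ (h' ⊗ₜ[R] h)) ∧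
    -- the counit `ξ ↦ ξ(1)` is an algebra map on `H_*`
    ((Coalgebra.counit : H →ₗ[R] R) 1 = 1 ∧
      ∀ ξ ∈ Hstar R H, ∀ η ∈ Hstar R H, conv ξ η 1 = ξ 1 * η 1) ∧
    -- `H_*` is stable under `S_*`
    (∀ ξ ∈ Hstar R H, ξ ∘ₗ HopfAlgebra.antipode (R := R) (A := H) ∈ Hstar R H) ∧
    -- `Δ_*` maps `H_*` into `H_* ⊗ H_*`, and with this decomposition `S_*` satisfies the
    -- antipode axiom with counit `ξ ↦ ξ(1)`
    (∀ ξ ∈ Hstar R H, ∃ (m : ℕ) (f g : Fin m → (H →ₗ[R] R)),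
      (∀ i, f i ∈ Hstar R H) ∧ (∀ i, g i ∈ Hstar R H) ∧
      (∀ h h' : H, ξ (h * h') = ∑ i, f i h * g i h') ∧
      (∑ i, conv (f i ∘ₗ HopfAlgebra.antipode (R := R) (A := H)) (g i))
        = ξ 1 • (Coalgebra.counit : H →ₗ[R] R) ∧
      (∑ i, conv (f i) (g i ∘ₗ HopfAlgebra.antipode (R := R) (A := H)))
        = ξ 1 • (Coalgebra.counit : H →ₗ[R] R)) :=
  Hstar_is_cocommutative_HopfAlgebra_general
end

section
/- Every ℕ-graded connected bialgebra H over k is a Hopf algebra: there exists a k-linear map S: H→H satisfying m∘(id⊗S)∘Δ = m∘(S⊗id)∘Δ = 1·ε (S is a two-sided convolution inverse of the identity of H). -/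
/-!
In the convolution algebra `WithConv (H →ₗ[R] H)`, the map `f = 1 - id` vanishes on the degree
zero part `H⁰ = R·1`; since `Δ` respects the grading, the convolution power `f ^ (n + 1)` then
vanishes on `Hⁿ`. So Takeuchi's series `∑ₘ fᵐ` is locally finite: its partial sums
`Sₙ = ∑_{m ≤ n} fᵐ` agree with each other on the degrees `≤ n` and glue to a linear map `S`.
On `Hⁿ`, convolution with `S` only sees `Sₙ`, and the geometric sum gives
`id * Sₙ = Sₙ * id = 1 - f ^ (n + 1)`, which is the unit on `Hⁿ`.
-/

open TensorProduct

/-- The submodule `A ⊗ B` of `H ⊗ H` spanned by the pure tensors `a ⊗ b` with `a ∈ A`,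
`b ∈ B`. -/
noncomputable def tensorSub {R H : Type*} [CommSemiring R] [AddCommMonoid H] [Module R H]
    (A B : Submodule R H) : Submodule R (H ⊗[R] H) :=
  Submodule.span R {z : H ⊗[R] H | ∃ a ∈ A, ∃ b ∈ B, z = a ⊗ₜ[R] b}

open Coalgebra WithConv

namespace DirectSum.IsInternal

variable {R ι M N : Type*} [Semiring R] [DecidableEq ι] [AddCommMonoid M] [Module R M]
  [AddCommMonoid N] [Module R N] {𝒜 : ι → Submodule R M}

theorem linearMap_ext (h : IsInternal 𝒜) {f g : M →ₗ[R] N}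
    (hfg : ∀ i, ∀ x ∈ 𝒜 i, f x = g x) : f = g := by
  refine LinearMap.ext_on (s := ⋃ i, (𝒜 i : Set M)) ?_ ?_
  · rw [← Submodule.iSup_eq_span, h.submodule_iSup_eq_top]
  · rintro x ⟨_, ⟨i, rfl⟩, hx⟩
    exact hfg i x hx

theorem exists_linearMap_apply_eq (h : IsInternal 𝒜) (φ : ι → M →ₗ[R] N) :
    ∃ Φ : M →ₗ[R] N, ∀ i, ∀ x ∈ 𝒜 i, Φ x = φ i x := by
  refine ⟨toModule R ι N (fun i ↦ φ i ∘ₗ (𝒜 i).subtype) ∘ₗ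
    (LinearEquiv.ofBijective (coeLinearMap 𝒜) h).symm.toLinearMap, fun i x hx ↦ ?_⟩
  have hsymm : (LinearEquiv.ofBijective (coeLinearMap 𝒜) h).symm x = lof R ι _ i ⟨x, hx⟩ :=
    (LinearEquiv.symm_apply_eq _).2 (coeLinearMap_lof 𝒜 i ⟨x, hx⟩).symm
  rw [LinearMap.comp_apply, LinearEquiv.coe_coe, hsymm, toModule_lof]
  rfl

end DirectSum.IsInternal

namespace Coalgebra

variable {R C : Type*} [CommSemiring R] [AddCommMonoid C] [Module R C]

def IsGradedComul [CoalgebraStruct R C] (𝒜 : ℕ → Submodule R C) : Prop :=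
  ∀ n : ℕ, ∀ x ∈ 𝒜 n,
    comul (R := R) x ∈ ⨆ (p : ℕ × ℕ) (_ : p.1 + p.2 = n), tensorSub (𝒜 p.1) (𝒜 p.2)

variable {𝒜 : ℕ → Submodule R C}

theorem IsGradedComul.apply_comul_eq_of_tmul_eq [CoalgebraStruct R C] (hcomul : IsGradedComul 𝒜)
    {M : Type*} [AddCommMonoid M] [Module R M] {Φ Ψ : C ⊗[R] C →ₗ[R] M} {n : ℕ}
    (h : ∀ i j, i + j = n → ∀ a ∈ 𝒜 i, ∀ b ∈ 𝒜 j, Φ (a ⊗ₜ b) = Ψ (a ⊗ₜ b))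
    {x : C} (hx : x ∈ 𝒜 n) : Φ (comul x) = Ψ (comul x) := by
  refine (iSup₂_le fun p hp ↦ ?_ : _ ≤ LinearMap.eqLocus Φ Ψ) (hcomul n x hx)
  rw [tensorSub, Submodule.span_le]
  rintro _ ⟨a, ha, b, hb, rfl⟩
  exact h p.1 p.2 hp a ha b hb

variable [Coalgebra R C] {A : Type*} [Ring A] [Algebra R A]

theorem IsGradedComul.convMul_apply_eq_of_mul_apply_eq (hcomul : IsGradedComul 𝒜)
    {f₁ g₁ f₂ g₂ : WithConv (C →ₗ[R] A)} {n : ℕ}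
    (h : ∀ i j, i + j = n → ∀ a ∈ 𝒜 i, ∀ b ∈ 𝒜 j, f₁ a * g₁ b = f₂ a * g₂ b)
    {x : C} (hx : x ∈ 𝒜 n) : (f₁ * g₁) x = (f₂ * g₂) x :=
  hcomul.apply_comul_eq_of_tmul_eq (Φ := LinearMap.mul' R A ∘ₗ map f₁.ofConv g₁.ofConv)
    (Ψ := LinearMap.mul' R A ∘ₗ map f₂.ofConv g₂.ofConv)
    (fun i j hij a ha b hb ↦ by simpa using h i j hij a ha b hb) hx

theorem IsGradedComul.convPow_apply_eq_zero_of_lt (hcomul : IsGradedComul 𝒜)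
    {f : WithConv (C →ₗ[R] A)} (hf : ∀ a ∈ 𝒜 0, f a = 0) :
    ∀ {m n : ℕ}, n < m → ∀ x ∈ 𝒜 n, (f ^ m) x = 0
  | m + 1, n, hnm, x, hx => by
    rw [pow_succ']
    refine (hcomul.convMul_apply_eq_of_mul_apply_eq (f₂ := 0) (g₂ := 0)
      (fun i j hij a ha b hb ↦ ?_) hx).trans (by simp)
    rcases i with _ | i
    · simp [hf a ha]
    · simp [hcomul.convPow_apply_eq_zero_of_lt hf (m := m) (by omega) b hb]

open Finset in
theorem IsGradedComul.isUnit_of_apply_eq_one_apply (hcomul : IsGradedComul 𝒜)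
    (hdirect : DirectSum.IsInternal 𝒜) {u : WithConv (C →ₗ[R] A)}
    (hu : ∀ a ∈ 𝒜 0, u a = (1 : WithConv (C →ₗ[R] A)) a) : IsUnit u := by
  set f := 1 - u
  have hnil : ∀ {m n : ℕ}, n < m → ∀ x ∈ 𝒜 n, (f ^ m) x = 0 :=
    hcomul.convPow_apply_eq_zero_of_lt fun a ha ↦ by simp [f, hu a ha]
  set S : ℕ → WithConv (C →ₗ[R] A) := fun n ↦ ∑ m ∈ range (n + 1), f ^ m
  have hS : ∀ {k n : ℕ}, k ≤ n → ∀ x ∈ 𝒜 k, S n x = S k x := by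
    intro k n hkn x hx
    simp only [S, ofConv_sum, LinearMap.sum_apply]
    refine (sum_subset (range_subset_range.2 (by omega : k + 1 ≤ n + 1))
      fun m _ hm ↦ hnil ?_ x hx).symm
    simpa using hm
  obtain ⟨T, hT⟩ := hdirect.exists_linearMap_apply_eq fun n ↦ (S n).ofConv
  have hTS : ∀ {k n : ℕ}, k ≤ n → ∀ x ∈ 𝒜 k, toConv T x = S n x := fun hkn x hx ↦
    (hT _ x hx).trans (hS hkn x hx).symm
  have hSn : ∀ n, ∀ x ∈ 𝒜 n, (1 - f ^ (n + 1)) x = (1 : WithConv (C →ₗ[R] A)) x :=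
    fun n x hx ↦ by simp [hnil (Nat.lt_succ_self n) x hx]
  have hu' : u = 1 - f := (sub_sub_cancel 1 u).symm
  refine isUnit_iff_exists.2 ⟨toConv T, WithConv.ext <| hdirect.linearMap_ext fun n x hx ↦ ?_,
    WithConv.ext <| hdirect.linearMap_ext fun n x hx ↦ ?_⟩
  · calc (u * toConv T) x = (u * S n) x :=
          hcomul.convMul_apply_eq_of_mul_apply_eq
            (fun i j hij a _ b hb ↦ by rw [hTS (n := n) (by omega) b hb]) hx
      _ = (1 : WithConv (C →ₗ[R] A)) x := by rw [hu', mul_neg_geom_sum, hSn n x hx]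
  · calc (toConv T * u) x = (S n * u) x :=
          hcomul.convMul_apply_eq_of_mul_apply_eq
            (fun i j hij a ha b _ ↦ by rw [hTS (n := n) (by omega) a ha]) hx
      _ = (1 : WithConv (C →ₗ[R] A)) x := by rw [hu', geom_sum_mul_neg, hSn n x hx]

end Coalgebra

theorem graded_connected_bialgebra_is_hopf_general
    {R H : Type*} [Field R] [Ring H] [Bialgebra R H]
    (𝒜 : ℕ → Submodule R H)
    (hdirect : DirectSum.IsInternal 𝒜)
    (hcomul : ∀ n : ℕ, ∀ x ∈ 𝒜 n,
      Coalgebra.comul (R := R) x ∈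
        ⨆ (p : ℕ × ℕ) (_ : p.1 + p.2 = n), tensorSub (𝒜 p.1) (𝒜 p.2))
    (hconn : 𝒜 0 = Submodule.span R {(1 : H)}) :
    ∃ S : H →ₗ[R] H,
      LinearMap.mul' R H ∘ₗ TensorProduct.map LinearMap.id S ∘ₗ Coalgebra.comul =
        Algebra.linearMap R H ∘ₗ Coalgebra.counit ∧
      LinearMap.mul' R H ∘ₗ TensorProduct.map S LinearMap.id ∘ₗ Coalgebra.comul =
        Algebra.linearMap R H ∘ₗ Coalgebra.counit := by
  have hid : ∀ a ∈ 𝒜 0, toConv (LinearMap.id : H →ₗ[R] H) a = (1 : WithConv (H →ₗ[R] H)) a := by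
    intro a ha
    rw [hconn, Submodule.mem_span_singleton] at ha
    obtain ⟨c, rfl⟩ := ha
    simp [Algebra.smul_def]
  obtain ⟨S, hleft, hright⟩ :=
    isUnit_iff_exists.1 (IsGradedComul.isUnit_of_apply_eq_one_apply hcomul hdirect hid)
  exact ⟨S.ofConv, congrArg ofConv hleft, congrArg ofConv hright⟩

/-- Every ℕ-graded connected bialgebra `H` over a field of characteristic zero is a Hopf
algebra: there is a `k`-linear map `S : H → H` with
`m ∘ (id ⊗ S) ∘ Δ = m ∘ (S ⊗ id) ∘ Δ = 1·ε`, i.e. `S` is a two-sided convolution inverse of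
the identity of `H`. -/
theorem graded_connected_bialgebra_is_hopf
    {R H : Type*} [Field R] [CharZero R] [Ring H] [Bialgebra R H]
    (𝒜 : ℕ → Submodule R H)
    (hdirect : DirectSum.IsInternal 𝒜)
    (hmul : ∀ (p q : ℕ), ∀ a ∈ 𝒜 p, ∀ b ∈ 𝒜 q, a * b ∈ 𝒜 (p + q))
    (hcomul : ∀ n : ℕ, ∀ x ∈ 𝒜 n,
      Coalgebra.comul (R := R) x ∈
        ⨆ (p : ℕ × ℕ) (_ : p.1 + p.2 = n), tensorSub (𝒜 p.1) (𝒜 p.2))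
    (hconn : 𝒜 0 = Submodule.span R {(1 : H)}) :
    ∃ S : H →ₗ[R] H,
      LinearMap.mul' R H ∘ₗ TensorProduct.map LinearMap.id S ∘ₗ Coalgebra.comul =
        Algebra.linearMap R H ∘ₗ Coalgebra.counit ∧
      LinearMap.mul' R H ∘ₗ TensorProduct.map S LinearMap.id ∘ₗ Coalgebra.comul =
        Algebra.linearMap R H ∘ₗ Coalgebra.counit :=
  graded_connected_bialgebra_is_hopf_general 𝒜 hdirect hcomul hconn
end
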